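/- arXiv:2102.03431 — 2 statements merged into one kernel-verified Lean document; each statement's English description precedes it below -/
import Mathlib

section
/- Let n ≥ 4, F ⊆ {1,…,n}, and a ∈ (ℤ/2ℤ)^F. If |{1,…,n} ∖ F| is odd then G(n,F,a) = {0}, and if |{1,…,n} ∖ F| ∈ {0, 2} then J_n ∩ G(n,F,a) = {0}. Consequently, if J_n ∩ G(n,F,a) ≠ {0}, then |{1,…,n} ∖ F| is even and at least 4. -/
noncomputable section

open MvPolynomial Finset

/-- Bit strings of length `n` with coordinate sum zero (the index set `G_n`). -/
abbrev Gn (n : ℕ) : Type := {g : Fin n → ZMod 2 // ∑ i, g i = 0}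

/-- The polynomial ring `R_n = ℂ[q_g : g ∈ G_n]`. -/
abbrev Rn (n : ℕ) : Type := MvPolynomial (Gn n) ℂ

/-- The parameter polynomial ring, with variables `a^i_g = X (i, g)`. -/
abbrev Sn : Type := MvPolynomial (ℕ × ZMod 2) ℂ

/-- The partial sum `g_1 + ⋯ + g_j` (with `j` 1-based). -/
def psum1 {n : ℕ} (g : Fin n → ZMod 2) (j : ℕ) : ZMod 2 :=
  ∑ i ∈ univ.filter fun i : Fin n => (i : ℕ) < j, g i

/-- The partial sum `g_2 + ⋯ + g_j` (with `j` 1-based). -/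
def psum2 {n : ℕ} (g : Fin n → ZMod 2) (j : ℕ) : ZMod 2 :=
  ∑ i ∈ univ.filter fun i : Fin n => 0 < (i : ℕ) ∧ (i : ℕ) < j, g i

/-- The leaf-edge monomial `a^1_{g_1} ⋯ a^n_{g_n}`. -/
def leafMonom {n : ℕ} (g : Fin n → ZMod 2) : Sn :=
  ∏ j : Fin n, X ((j : ℕ) + 1, g j)

/-- `ψ_{T_0}(q_g) = (∏_{j=1}^n a^j_{g_j}) ∏_{j=1}^{n-1} a^{n+j}_{g_1+⋯+g_j}`. -/
def tree0Monom {n : ℕ} (g : Fin n → ZMod 2) : Sn :=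
  leafMonom g * ∏ j ∈ Icc 1 (n - 1), X (n + j, psum1 g j)

/-- `ψ_{T_1}(q_g) = (∏_{j=1}^n a^j_{g_j}) ∏_{j=2}^{n} a^{n+j}_{g_2+⋯+g_j}`. -/
def tree1Monom {n : ℕ} (g : Fin n → ZMod 2) : Sn :=
  leafMonom g * ∏ j ∈ Icc 2 n, X (n + j, psum2 g j)

/-- The parameterization of the first underlying tree of the `n`-sunlet. -/
def ψtree0 (n : ℕ) : Rn n →ₐ[ℂ] Sn := aeval fun g => tree0Monom g.1

/-- The parameterization of the second underlying tree of the `n`-sunlet. -/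
def ψtree1 (n : ℕ) : Rn n →ₐ[ℂ] Sn := aeval fun g => tree1Monom g.1

/-- The `n`-sunlet parameterization `ψ_n`. -/
def ψsunlet (n : ℕ) : Rn n →ₐ[ℂ] Sn := aeval fun g => tree0Monom g.1 + tree1Monom g.1

/-- The `n`-sunlet ideal `J_n = ker ψ_n`. -/
def Jsunlet (n : ℕ) : Ideal (Rn n) := RingHom.ker (ψsunlet n)

/-- The tree ideal `I_{T_0}`. -/
def Itree0 (n : ℕ) : Ideal (Rn n) := RingHom.ker (ψtree0 n)

/-- The tree ideal `I_{T_1}`. -/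
def Itree1 (n : ℕ) : Ideal (Rn n) := RingHom.ker (ψtree1 n)

/-- The condition for `q_g q_h` to be a spanning monomial of the glove `G(n,F,a)`:
`g` and `h` agree with `a` on `F`, and `g_i + h_i = 1` off `F`. -/
def GlovePair {n : ℕ} (F : Finset (Fin n)) (a : Fin n → ZMod 2) (g h : Gn n) : Prop :=
  (∀ i ∈ F, g.1 i = a i) ∧ (∀ i ∈ F, h.1 i = a i) ∧ ∀ i ∉ F, g.1 i + h.1 i = 1

instance {n : ℕ} (F : Finset (Fin n)) (a : Fin n → ZMod 2) (g h : Gn n) :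
    Decidable (GlovePair F a g h) := by unfold GlovePair; infer_instance

/-- The glove `G(n,F,a)`, as a `ℂ`-subspace of `R_n`. -/
def glove {n : ℕ} (F : Finset (Fin n)) (a : Fin n → ZMod 2) : Submodule ℂ (Rn n) :=
  Submodule.span ℂ {p | ∃ g h : Gn n, GlovePair F a g h ∧ p = X g * X h}

/-- Strict lexicographic order on bit strings. -/
def lexLt {n : ℕ} (g h : Fin n → ZMod 2) : Prop :=
  ∃ i : Fin n, (∀ j : Fin n, j < i → g j = h j) ∧ (g i).val < (h i).val

instance {n : ℕ} (g h : Fin n → ZMod 2) : Decidable (lexLt g h) := by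
  unfold lexLt; infer_instance

/-- Non-strict lexicographic order on bit strings. -/
def lexLe {n : ℕ} (g h : Fin n → ZMod 2) : Prop := g = h ∨ lexLt g h

instance {n : ℕ} (g h : Fin n → ZMod 2) : Decidable (lexLe g h) := by
  unfold lexLe; infer_instance

/-- Membership in `L(n,F,a)`: `g` is the lexicographically smaller index of a
spanning monomial `q_g q_h` of the glove `G(n,F,a)`. -/
def Lmem {n : ℕ} (F : Finset (Fin n)) (a : Fin n → ZMod 2) (g : Gn n) : Prop :=
  ∃ h : Gn n, GlovePair F a g h ∧ lexLe g.1 h.1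

instance {n : ℕ} (F : Finset (Fin n)) (a : Fin n → ZMod 2) (g : Gn n) :
    Decidable (Lmem F a g) := by unfold Lmem; infer_instance

/-- The cardinality of `{1,…,j} ∖ F` (1-based `j`). -/
def cardInit {n : ℕ} (F : Finset (Fin n)) (j : ℕ) : ℕ :=
  ((univ.filter fun i : Fin n => (i : ℕ) < j) \ F).card

/-- `𝔼(n,F) = {j : 2 ≤ j ≤ n-1, |{1,…,j} ∖ F| even}`. -/
def Eset (n : ℕ) (F : Finset (Fin n)) : Finset ℕ :=
  (Icc 2 (n - 1)).filter fun j => Even (cardInit F j)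

/-- `𝕆(n,F) = {j : 2 ≤ j ≤ n-1, |{1,…,j} ∖ F| odd}`. -/
def Oset (n : ℕ) (F : Finset (Fin n)) : Finset ℕ :=
  (Icc 2 (n - 1)).filter fun j => Odd (cardInit F j)

/-- The general element of the glove `G(n,F,a)` with coefficient `c g` on the
spanning monomial `q_g q_h` (where `g` is lexicographically smaller than `h`). -/
def gloveElt {n : ℕ} (F : Finset (Fin n)) (a : Fin n → ZMod 2) (c : Gn n → ℂ) : Rn n :=
  ∑ g : Gn n, ∑ h : Gn n,
    (if GlovePair F a g h ∧ lexLe g.1 h.1 then c g else 0) • (X g * X h : Rn n)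

/-- `M_𝔼` vanishes on the glove element with coefficients `c`: each coordinate of the
image (indexed by an 𝔼-coloring) is the sum of the coefficients of the spanning
monomials with that 𝔼-coloring. -/
def MEkerCond {n : ℕ} (F : Finset (Fin n)) (a : Fin n → ZMod 2) (c : Gn n → ℂ) : Prop :=
  ∀ v : ℕ → ZMod 2,
    (∑ g : Gn n, if Lmem F a g ∧ ∀ j ∈ Eset n F, psum1 g.1 j = v j then c g else 0) = 0

/-- `M_𝕆` vanishes on the glove element with coefficients `c`. -/
def MOkerCond {n : ℕ} (F : Finset (Fin n)) (a : Fin n → ZMod 2) (c : Gn n → ℂ) : Prop :=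
  ∀ v : ℕ → ZMod 2,
    (∑ g : Gn n, if Lmem F a g ∧ ∀ j ∈ Oset n F, psum1 g.1 j = v j then c g else 0) = 0

/-!
Summing the coordinates of a glove pair `(g, h)` shows that `|Fᶜ|` vanishes mod 2, so the glove
is empty when `|Fᶜ|` is odd. When `|Fᶜ| ≤ 2`, a `g` that agrees with `a` on `F` is fixed up to
flipping all coordinates off `F`, because `g` sums to zero; hence the glove is spanned by a single
monomial `q_g q_h`, and `ψ_n (q_g q_h)` is nonzero since it evaluates to `4` at the all-ones point.
-/

theorem eq_of_sum_eq_zero_of_card_le_two {R ι : Type*} [Ring R] [CharP R 2] [DecidableEq ι]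
    {s : Finset ι} (hs : s.card ≤ 2) {x : ι → R} (hx : ∑ i ∈ s, x i = 0)
    {i j : ι} (hi : i ∈ s) (hj : j ∈ s) : x i = x j := by
  by_cases hij : i = j
  · rw [hij]
  have hpair : ({i, j} : Finset ι) = s :=
    eq_of_subset_of_card_le (insert_subset hi (singleton_subset_iff.mpr hj))
      (by rw [card_pair hij]; exact hs)
  rw [← hpair, sum_pair hij] at hx
  exact CharTwo.add_eq_zero.mp hx

section OffIndicator

variable {ι : Type*} [Fintype ι] [DecidableEq ι]

def offIndicator (F : Finset ι) : ι → ZMod 2 := fun i => if i ∈ F then 0 else 1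

theorem sum_offIndicator (F : Finset ι) : ∑ i, offIndicator F i = (Fᶜ.card : ZMod 2) := by
  simp [offIndicator, sum_ite, filter_not, compl_eq_univ_sdiff]

theorem eq_zero_or_eq_offIndicator {F : Finset ι} (hF : Fᶜ.card ≤ 2) {d : ι → ZMod 2}
    (hd : ∀ i ∈ F, d i = 0) (hsum : ∑ i, d i = 0) : d = 0 ∨ d = offIndicator F := by
  have hsumc : ∑ i ∈ Fᶜ, d i = 0 := by
    rwa [← sum_add_sum_compl F, sum_eq_zero hd, zero_add] at hsum
  have hconst : ∀ i ∉ F, ∀ j ∉ F, d i = d j := fun i hi j hj =>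
    eq_of_sum_eq_zero_of_card_le_two hF hsumc (mem_compl.mpr hi) (mem_compl.mpr hj)
  by_cases hzero : ∀ i ∉ F, d i = 0
  · left
    funext i
    by_cases hi : i ∈ F
    exacts [hd i hi, hzero i hi]
  · right
    push Not at hzero
    obtain ⟨i₀, hi₀, hne⟩ := hzero
    have hone : d i₀ = 1 := by revert hne; generalize d i₀ = t; revert t; decide
    funext j
    by_cases hj : j ∈ F
    · simp [offIndicator, hj, hd j hj]
    · simp [offIndicator, hj, hconst j hj i₀ hi₀, hone]

end OffIndicator

section Glove

variable {n : ℕ} {F : Finset (Fin n)} {a : Fin n → ZMod 2}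

theorem GlovePair.snd_eq {g h : Gn n} (hp : GlovePair F a g h) :
    h.1 = g.1 + offIndicator F := by
  obtain ⟨hg, hh, hgh⟩ := hp
  funext i
  by_cases hi : i ∈ F
  · simp [offIndicator, hi, hg i hi, hh i hi]
  · simp only [Pi.add_apply, offIndicator, hi, if_false]
    rw [← hgh i hi, CharTwo.add_cancel_left]

theorem GlovePair.even_card_compl {g h : Gn n} (hp : GlovePair F a g h) : Even Fᶜ.card := by
  have hsum := h.2
  rw [hp.snd_eq, Pi.add_def, sum_add_distrib, g.2, zero_add, sum_offIndicator] at hsum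
  exact ZMod.natCast_eq_zero_iff_even.mp hsum

theorem GlovePair.X_mul_X_eq (hF : Fᶜ.card ≤ 2) {g h g' h' : Gn n}
    (hp : GlovePair F a g h) (hp' : GlovePair F a g' h') :
    (X g' * X h' : Rn n) = X g * X h := by
  have hd : ∀ i ∈ F, (g'.1 - g.1) i = 0 := fun i hi => by
    simp [hp.1 i hi, hp'.1 i hi]
  have hsum : ∑ i, (g'.1 - g.1) i = 0 := by
    simp only [Pi.sub_apply, sum_sub_distrib, g.2, g'.2, sub_zero]
  have hflip : ∀ x : Fin n → ZMod 2, x + offIndicator F + offIndicator F = x := fun x =>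
    funext fun i => CharTwo.add_cancel_right (x i) _
  rcases eq_zero_or_eq_offIndicator hF hd hsum with hsame | hswap
  · have hg : g' = g := Subtype.ext (sub_eq_zero.mp hsame)
    have hh : h' = h := Subtype.ext (by rw [hp'.snd_eq, hp.snd_eq, hg])
    rw [hg, hh]
  · have hg : g' = h := Subtype.ext (by rw [hp.snd_eq, ← hswap, add_sub_cancel])
    have hh : h' = g := Subtype.ext (by rw [hp'.snd_eq, hg, hp.snd_eq, hflip])
    rw [hg, hh, mul_comm]

theorem glove_eq_bot_of_forall_not_glovePair (hF : ∀ g h : Gn n, ¬ GlovePair F a g h) :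
    glove F a = ⊥ :=
  Submodule.span_eq_bot.mpr fun _ ⟨g, h, hp, _⟩ => (hF g h hp).elim

theorem glove_eq_bot_of_odd (hF : Odd Fᶜ.card) : glove F a = ⊥ :=
  glove_eq_bot_of_forall_not_glovePair fun _ _ hp =>
    Nat.not_even_iff_odd.mpr hF hp.even_card_compl

theorem glove_le_span_singleton (hF : Fᶜ.card ≤ 2) {g h : Gn n} (hp : GlovePair F a g h) :
    glove F a ≤ ℂ ∙ (X g * X h : Rn n) :=
  Submodule.span_le.mpr fun _ ⟨_, _, hp', hx⟩ => by
    rw [hx, hp.X_mul_X_eq hF hp']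
    exact Submodule.mem_span_singleton_self _

end Glove

theorem eval_one_ψsunlet_X {n : ℕ} (g : Gn n) :
    eval (fun _ => (1 : ℂ)) (ψsunlet n (X g)) = 2 := by
  norm_num [ψsunlet, tree0Monom, tree1Monom, leafMonom]

theorem X_mul_X_notMem_Jsunlet {n : ℕ} (g h : Gn n) : (X g * X h : Rn n) ∉ Jsunlet n := by
  have hX : ∀ k : Gn n, ψsunlet n (X k) ≠ 0 := fun k hk => by
    simpa [hk] using eval_one_ψsunlet_X k
  rw [Jsunlet, RingHom.mem_ker, map_mul]
  exact mul_ne_zero (hX g) (hX h)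

theorem Jsunlet_inf_glove_eq_bot {n : ℕ} {F : Finset (Fin n)} (hF : Fᶜ.card ≤ 2)
    (a : Fin n → ZMod 2) : Submodule.restrictScalars ℂ (Jsunlet n) ⊓ glove F a = ⊥ := by
  by_cases hpair : ∃ g h : Gn n, GlovePair F a g h
  · obtain ⟨g, h, hp⟩ := hpair
    have hdisj : Disjoint (Submodule.restrictScalars ℂ (Jsunlet n)) (ℂ ∙ (X g * X h : Rn n)) :=
      Submodule.disjoint_span_singleton.mpr fun hJ => (X_mul_X_notMem_Jsunlet g h hJ).elim
    exact disjoint_iff.mp (hdisj.mono_right (glove_le_span_singleton hF hp))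
  · push Not at hpair
    rw [glove_eq_bot_of_forall_not_glovePair hpair, inf_bot_eq]

theorem glove_trivial_cases_general (n : ℕ) (F : Finset (Fin n)) (a : Fin n → ZMod 2) :
    (Odd (Fᶜ.card) → glove F a = ⊥) ∧
    (Fᶜ.card = 0 ∨ Fᶜ.card = 2 →
      Submodule.restrictScalars ℂ (Jsunlet n) ⊓ glove F a = ⊥) ∧
    (Submodule.restrictScalars ℂ (Jsunlet n) ⊓ glove F a ≠ ⊥ →
      Even (Fᶜ.card) ∧ 4 ≤ Fᶜ.card) := by
  refine ⟨glove_eq_bot_of_odd, fun hF => Jsunlet_inf_glove_eq_bot (by omega) a, fun hne => ?_⟩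
  have heven : Even Fᶜ.card := by
    by_contra hodd
    apply hne
    rw [glove_eq_bot_of_odd (Nat.not_even_iff_odd.mp hodd), inf_bot_eq]
  refine ⟨heven, ?_⟩
  by_contra hlt
  obtain ⟨k, hk⟩ := heven
  exact hne (Jsunlet_inf_glove_eq_bot (by omega) a)

/-- Remark 4.5: if `|[n] ∖ F|` is odd the glove is zero; if `|[n] ∖ F| ∈ {0,2}` the glove
meets `J_n` trivially; hence `J_n ∩ G(n,F,a) ≠ 0` forces `|[n] ∖ F|` even and `≥ 4`. -/
theorem glove_trivial_cases (n : ℕ) (hn : 4 ≤ n) (F : Finset (Fin n)) (a : Fin n → ZMod 2) :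
    (Odd (Fᶜ.card) → glove F a = ⊥) ∧
    (Fᶜ.card = 0 ∨ Fᶜ.card = 2 →
      Submodule.restrictScalars ℂ (Jsunlet n) ⊓ glove F a = ⊥) ∧
    (Submodule.restrictScalars ℂ (Jsunlet n) ⊓ glove F a ≠ ⊥ →
      Even (Fᶜ.card) ∧ 4 ≤ Fᶜ.card) :=
  glove_trivial_cases_general n F a
end
end

section
/- Let n ≥ 4 and let ψ' : R_n → S_n be the ℂ-algebra homomorphism determined by ψ'(q_g) = ∏_{j=2}^{n} a^j_{g_j} · ∏_{j=2}^{n−1} a^{n+j}_{g_2+⋯+g_j} (the parameterization of the (n−1)-leaf tree obtained from the n-sunlet by deleting the reticulation vertex together with all edges adjacent to it). Then for every polynomial f ∈ R_n involving only variables q_g with g_1 = 0, one has ψ_n(f) = 0 if and only if ψ'(f) = 0; in particular, the elimination ideal J_n ∩ ℂ[q_g : g ∈ G_n, g_1 = 0] coincides with the tree ideal ker ψ' intersected with that subring, so it is isomorphic to the ideal of phylogenetic invariants of this (n−1)-leaf tree. -/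
noncomputable section

open MvPolynomial Finset

/-- The parameterization of the `(n-1)`-leaf tree obtained from the `n`-sunlet by deleting
the reticulation vertex and all adjacent edges:
`ψ'(q_g) = (∏_{j=2}^n a^j_{g_j}) · ∏_{j=2}^{n-1} a^{n+j}_{g_2+⋯+g_j}`. -/
def ψelim (n : ℕ) : Rn n →ₐ[ℂ] Sn :=
  aeval fun g : Gn n =>
    (∏ j ∈ univ.filter fun j : Fin n => 0 < (j : ℕ), X ((j : ℕ) + 1, g.1 j)) *
      ∏ j ∈ Icc 2 (n - 1), X (n + j, psum2 g.1 j)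

/-!
For `g_1 = 0` the two trees of the sunlet differ only in the edges at the reticulation vertex, so
`ψ_n(q_g) = u · ψ'(q_g)` with `u = a^1_0 (a^{n+1}_0 + a^{2n}_0)`. The specialization
`a^1, a^{n+1} ↦ 1, a^{2n} ↦ 0` sends `u` to `1` and fixes every `ψ'(q_g)`, so it carries `ψ_n(f)`
to `ψ'(f)`. Conversely each `ψ'(q_g)` contains exactly one variable `a^2`, so the substitution
`a^2 ↦ u a^2` carries `ψ'(f)` to `ψ_n(f)`. Each of `ψ_n(f)`, `ψ'(f)` is thus an image of the other
under an algebra map, and one vanishes iff the other does.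
-/

lemma MvPolynomial.eqOn_supported {R σ A : Type*} [CommSemiring R] [Semiring A] [Algebra R A]
    {φ ψ : MvPolynomial σ R →ₐ[R] A} {s : Set σ} (h : ∀ i ∈ s, φ (X i) = ψ (X i)) :
    Set.EqOn φ ψ (supported R s) :=
  AlgHom.eqOn_adjoin_iff.2 <| by
    rintro _ ⟨i, hi, rfl⟩
    exact h i hi

lemma psum2_one {n : ℕ} (g : Fin n → ZMod 2) : psum2 g 1 = 0 :=
  sum_eq_zero fun i hi => absurd (mem_filter.1 hi).2 (by omega)

lemma psum1_eq_psum2_of_head_eq_zero {n : ℕ} (hn : 0 < n) {g : Fin n → ZMod 2}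
    (hg : g ⟨0, hn⟩ = 0) (j : ℕ) : psum1 g j = psum2 g j := by
  refine (sum_subset (fun i hi => ?_) fun i hi hni => ?_).symm
  · simp only [mem_filter, mem_univ, true_and] at hi ⊢
    exact hi.2
  · simp only [mem_filter, mem_univ, true_and, not_and, not_lt] at hi hni
    rwa [show i = ⟨0, hn⟩ from Fin.ext (by dsimp only; omega)]

lemma filter_not_pos_eq_singleton_zero {n : ℕ} (hn : 0 < n) :
    univ.filter (fun i : Fin n => ¬ 0 < (i : ℕ)) = {⟨0, hn⟩} := by
  ext i
  simp [Fin.ext_iff]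

lemma psum2_self_of_head_eq_zero {n : ℕ} (hn : 0 < n) {g : Fin n → ZMod 2}
    (hg : g ⟨0, hn⟩ = 0) (hsum : ∑ i, g i = 0) : psum2 g n = 0 := by
  have hsplit := sum_filter_add_sum_filter_not univ (fun i : Fin n => 0 < (i : ℕ)) g
  rw [hsum, filter_not_pos_eq_singleton_zero hn, sum_singleton, hg, add_zero] at hsplit
  rw [psum2, ← hsplit]
  exact sum_congr (filter_congr fun i _ => by simp [i.isLt]) fun _ _ => rfl

def reticulationFactor (n : ℕ) : Sn :=
  X (1, 0) * (X (n + 1, 0) + X (n + n, 0))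

def elimMonom {n : ℕ} (g : Fin n → ZMod 2) : Sn :=
  (∏ j ∈ univ.filter fun j : Fin n => 0 < (j : ℕ), X ((j : ℕ) + 1, g j)) *
    ∏ j ∈ Icc 2 (n - 1), X (n + j, psum2 g j)

lemma ψelim_X (n : ℕ) (g : Gn n) : ψelim n (X g) = elimMonom g.1 :=
  aeval_X _ _

lemma leafMonom_of_head_eq_zero {n : ℕ} (hn : 0 < n) {g : Fin n → ZMod 2}
    (hg : g ⟨0, hn⟩ = 0) :
    leafMonom g = X (1, 0) * ∏ j ∈ univ.filter fun j : Fin n => 0 < (j : ℕ), X ((j : ℕ) + 1, g j) := by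
  rw [leafMonom, ← prod_filter_mul_prod_filter_not univ (fun j : Fin n => 0 < (j : ℕ)), mul_comm,
    filter_not_pos_eq_singleton_zero hn, prod_singleton, hg]

lemma tree0Monom_add_tree1Monom {n : ℕ} (hn : 2 ≤ n) {g : Fin n → ZMod 2}
    (hg : g ⟨0, by omega⟩ = 0) (hsum : ∑ i, g i = 0) :
    tree0Monom g + tree1Monom g = reticulationFactor n * elimMonom g := by
  have htree0 : ∏ j ∈ Icc 1 (n - 1), X (n + j, psum1 g j)
      = (X (n + 1, 0) : Sn) * ∏ j ∈ Icc 2 (n - 1), X (n + j, psum2 g j) := by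
    rw [show Icc 1 (n - 1) = insert 1 (Icc 2 (n - 1)) by ext; simp only [mem_Icc, mem_insert]; omega,
      prod_insert (by simp), psum1_eq_psum2_of_head_eq_zero (by omega) hg, psum2_one]
    exact congrArg _ (prod_congr rfl fun j _ => by rw [psum1_eq_psum2_of_head_eq_zero (by omega) hg])
  have htree1 : ∏ j ∈ Icc 2 n, X (n + j, psum2 g j)
      = (X (n + n, 0) : Sn) * ∏ j ∈ Icc 2 (n - 1), X (n + j, psum2 g j) := by
    rw [show Icc 2 n = insert n (Icc 2 (n - 1)) by ext; simp only [mem_Icc, mem_insert]; omega,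
      prod_insert (by simp; omega), psum2_self_of_head_eq_zero (by omega) hg hsum]
  rw [tree0Monom, tree1Monom, htree0, htree1, leafMonom_of_head_eq_zero (by omega) hg,
    reticulationFactor, elimMonom]
  ring

lemma ψsunlet_X_of_head_eq_zero {n : ℕ} (hn : 2 ≤ n) {g : Gn n} (hg : g.1 ⟨0, by omega⟩ = 0) :
    ψsunlet n (X g) = reticulationFactor n * ψelim n (X g) := by
  rw [ψsunlet, aeval_X, ψelim_X, tree0Monom_add_tree1Monom hn hg g.2]

def collapseReticulation (n : ℕ) : Sn →ₐ[ℂ] Sn :=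
  aeval fun p : ℕ × ZMod 2 =>
    if p.1 = 1 ∨ p.1 = n + 1 then 1 else if p.1 = n + n then 0 else X p

def absorbReticulation (n : ℕ) : Sn →ₐ[ℂ] Sn :=
  aeval fun p : ℕ × ZMod 2 => if p.1 = 2 then reticulationFactor n * X p else X p

lemma collapseReticulation_X_of_ne {n : ℕ} {p : ℕ × ZMod 2} (h1 : p.1 ≠ 1) (hn1 : p.1 ≠ n + 1)
    (hnn : p.1 ≠ n + n) : collapseReticulation n (X p) = X p := by
  simp [collapseReticulation, h1, hn1, hnn]

lemma absorbReticulation_X_of_ne {n : ℕ} {p : ℕ × ZMod 2} (h2 : p.1 ≠ 2) :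
    absorbReticulation n (X p) = X p := by
  simp [absorbReticulation, h2]

lemma collapseReticulation_reticulationFactor {n : ℕ} (hn : 2 ≤ n) :
    collapseReticulation n (reticulationFactor n) = 1 := by
  simp [collapseReticulation, reticulationFactor, show n + n ≠ 1 by omega, show n ≠ 1 by omega]

lemma collapseReticulation_elimMonom {n : ℕ} (g : Fin n → ZMod 2) :
    collapseReticulation n (elimMonom g) = elimMonom g := by
  rw [elimMonom, map_mul, map_prod, map_prod]
  congr 1
  · refine prod_congr rfl fun j hj => collapseReticulation_X_of_ne ?_ ?_ ?_ <;>
      · simp only [mem_filter, mem_univ, true_and] at hj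
        have := j.isLt
        dsimp only
        omega
  · refine prod_congr rfl fun j hj => collapseReticulation_X_of_ne ?_ ?_ ?_ <;>
      · simp only [mem_Icc] at hj
        dsimp only
        omega

lemma absorbReticulation_elimMonom {n : ℕ} (hn : 2 ≤ n) (g : Fin n → ZMod 2) :
    absorbReticulation n (elimMonom g) = reticulationFactor n * elimMonom g := by
  have hsplit : univ.filter (fun j : Fin n => 0 < (j : ℕ))
      = insert ⟨1, by omega⟩ (univ.filter fun j : Fin n => 1 < (j : ℕ)) := by
    ext i
    simp only [mem_filter, mem_univ, true_and, mem_insert, Fin.ext_iff]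
    omega
  have hfresh : (⟨1, by omega⟩ : Fin n) ∉ univ.filter fun j : Fin n => 1 < (j : ℕ) := by simp
  rw [elimMonom, hsplit, prod_insert hfresh, map_mul, map_mul, map_prod, map_prod]
  rw [prod_congr rfl fun j hj => absorbReticulation_X_of_ne (by
      simp only [mem_filter, mem_univ, true_and] at hj; dsimp only; omega),
    prod_congr rfl fun j hj => absorbReticulation_X_of_ne (by
      simp only [mem_Icc] at hj; dsimp only; omega)]
  simp only [absorbReticulation, aeval_X, if_true]
  ring

/-- Lemma 6.4: on polynomials involving only the variables `q_g` with `g_1 = 0`, the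
sunlet parameterization `ψ_n` vanishes iff the tree parameterization `ψ'` does; hence
the elimination ideal `J_n ∩ ℂ[q_g : g_1 = 0]` is the ideal of invariants of the
`(n-1)`-leaf tree. -/
theorem sunlet_elimination_is_tree (n : ℕ) (hn : 4 ≤ n) (f : Rn n)
    (hf : f ∈ MvPolynomial.supported ℂ {g : Gn n | g.1 ⟨0, by omega⟩ = 0}) :
    ψsunlet n f = 0 ↔ ψelim n f = 0 := by
  have hcollapse : collapseReticulation n (ψsunlet n f) = ψelim n f :=
    eqOn_supported (φ := (collapseReticulation n).comp (ψsunlet n)) (fun g hg => by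
      rw [AlgHom.comp_apply, ψsunlet_X_of_head_eq_zero (by omega) hg, map_mul, ψelim_X,
        collapseReticulation_reticulationFactor (by omega), collapseReticulation_elimMonom,
        one_mul]) hf
  have habsorb : absorbReticulation n (ψelim n f) = ψsunlet n f :=
    eqOn_supported (φ := (absorbReticulation n).comp (ψelim n)) (fun g hg => by
      rw [AlgHom.comp_apply, ψsunlet_X_of_head_eq_zero (by omega) hg, ψelim_X,
        absorbReticulation_elimMonom (by omega)]) hf
  exact ⟨fun h => by rw [← hcollapse, h, map_zero], fun h => by rw [← habsorb, h, map_zero]⟩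
end
end
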